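/- arXiv:2310.12934 — 9 statements merged into one kernel-verified Lean document; each statement's English description precedes it below -/
import Mathlib

section
/- Let G = (S, E) be a finite DAG with initial state s₀ and terminal states X, let P_B be a fixed backward policy (P_B(s|s') > 0 iff (s,s') ∈ E, summing to 1 over parents of s'), and let R : X → ℝ_{>0} be a reward function. Construct the deterministic MDP M_G with state space S ∪ {s_f}, actions at each non-terminal state s given by its children, a single action from each x ∈ X to the absorbing state s_f, discount γ = 1, and rewards r(s,s') = log P_B(s|s') for s ∉ X ∪ {s_f}, r(x, s_f) = log R(x) for x ∈ X, and r(s_f,s_f) = 0. Then the optimal policy of the entropy-regularized (λ = 1) MDP M_G equals the GFlowNet forward policy P_F determined by P_B and R, i.e., the unique forward policy satisfying the trajectory balance condition with respect to P_B and R. -/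
/- Common setup: finite DAGs, policies, trajectories, GFlowNet notions. -/

noncomputable section
open scoped Classical
open Finset Real

/-- A finite DAG with a distinguished initial state `s0`. Acyclicity is witnessed
by a rank function that strictly increases along edges. -/
structure FinDAG (S : Type) [Fintype S] where
  edge : S → S → Prop
  rank : S → ℕ
  rank_lt : ∀ ⦃s s'⦄, edge s s' → rank s < rank s'
  s0 : S

variable {S : Type} [Fintype S]

namespace FinDAG

/-- A state is terminal iff it has no outgoing edges. -/
def Terminal (G : FinDAG S) (s : S) : Prop := ∀ s', ¬ G.edge s s'

/-- The children of a state. -/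
def children (G : FinDAG S) (s : S) : Finset S := Finset.univ.filter fun s' => G.edge s s'

/-- The parents of a state. -/
def parents (G : FinDAG S) (s' : S) : Finset S := Finset.univ.filter fun s => G.edge s s'

/-- The set of terminal states `X`. -/
def X (G : FinDAG S) : Finset S := Finset.univ.filter fun x => G.Terminal x

/-- `PB` is a (full-support) backward policy: positive exactly on edges, and for each
state with parents, the probabilities of its parents sum to one. -/
structure IsBackward (G : FinDAG S) (PB : S → S → ℝ) : Prop where
  pos : ∀ s s', G.edge s s' → 0 < PB s s'
  supp : ∀ s s', ¬ G.edge s s' → PB s s' = 0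
  sum_one : ∀ s', (G.parents s').Nonempty → ∑ s ∈ G.parents s', PB s s' = 1

/-- `PF` is a (full-support) forward policy: positive exactly on edges, and for each
non-terminal state the probabilities of its children sum to one. -/
structure IsForward (G : FinDAG S) (PF : S → S → ℝ) : Prop where
  pos : ∀ s s', G.edge s s' → 0 < PF s s'
  supp : ∀ s s', ¬ G.edge s s' → PF s s' = 0
  sum_one : ∀ s, ¬ G.Terminal s → ∑ s' ∈ G.children s, PF s s' = 1

/-- A complete trajectory: starts at `s0`, follows edges and ends in a terminal state. -/
def IsTraj (G : FinDAG S) (τ : List S) : Prop :=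
  τ.head? = some G.s0 ∧ τ.Chain' G.edge ∧ G.Terminal (τ.getLastD G.s0)

/-- The terminal state `x_τ` reached by a trajectory. -/
def lastState (G : FinDAG S) (τ : List S) : S := τ.getLastD G.s0

/-- A Markovian flow `F` induced by the backward policy `PB` and reward `R`:
`F(x) = R(x)` on terminal states, and `F(s) = ∑_{s'} P_B(s|s') F(s')`
(the edge flow being `F(s→s') = P_B(s|s') F(s')`). -/
def IsFlow (G : FinDAG S) (PB : S → S → ℝ) (R : S → ℝ) (F : S → ℝ) : Prop :=
  (∀ x, G.Terminal x → F x = R x) ∧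
  (∀ s, ¬ G.Terminal s → F s = ∑ s' ∈ G.children s, PB s s' * F s')

/-- `V` solves the soft Bellman optimality equations (λ = 1) of the MDP `M_G`
with rewards `r(s,s') = log P_B(s|s')` on interior edges and `log R(x)` at the
terminal transition `x → s_f` (so `V(x) = log R(x)`). -/
def IsSoftValue (G : FinDAG S) (PB : S → S → ℝ) (R : S → ℝ) (V : S → ℝ) : Prop :=
  (∀ x, G.Terminal x → V x = Real.log (R x)) ∧
  (∀ s, ¬ G.Terminal s →
    V s = Real.log (∑ s' ∈ G.children s, Real.exp (Real.log (PB s s') + V s')))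

/-- The softmax-optimal policy `π*(s'|s) = exp(r(s,s') + V(s') − V(s))`. -/
def softOpt (G : FinDAG S) (PB : S → S → ℝ) (V : S → ℝ) (s s' : S) : ℝ :=
  if G.edge s s' then Real.exp (Real.log (PB s s') + V s' - V s) else 0

end FinDAG

/-- Product of `f` over consecutive pairs of the list `τ`. -/
def pathProd (f : S → S → ℝ) (τ : List S) : ℝ :=
  ((τ.zip τ.tail).map fun p => f p.1 p.2).prod

/-- Sum of `f` over consecutive pairs of the list `τ`. -/
def pathSum (f : S → S → ℝ) (τ : List S) : ℝ :=
  ((τ.zip τ.tail).map fun p => f p.1 p.2).sum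



set_option linter.unusedSectionVars false

section AuxGFN

variable {S : Type} [Fintype S]

lemma pathProd_nil' (f : S → S → ℝ) : pathProd f ([] : List S) = 1 := rfl

lemma pathProd_single' (f : S → S → ℝ) (a : S) : pathProd f [a] = 1 := by
  simp [pathProd]

lemma pathProd_cons' (f : S → S → ℝ) (a b : S) (l : List S) :
    pathProd f (a :: b :: l) = f a b * pathProd f (b :: l) := by
  simp [pathProd]

lemma getLastD_cons_eq (a : S) (l : List S) (d d' : S) :
    (a :: l).getLastD d = (a :: l).getLastD d' := by
  simp only [List.getLastD_cons]

lemma head?_eq_cons {q : List S} {s : S} (h : q.head? = some s) : ∃ q', q = s :: q' := by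
  cases q with
  | nil => simp at h
  | cons a q' =>
    simp only [List.head?_cons, Option.some.injEq] at h
    exact ⟨q', by rw [h]⟩

lemma pathProd_glue (f : S → S → ℝ) (s : S) :
    ∀ (α : List S) (β : List S),
      pathProd f (α ++ s :: β) = pathProd f (α ++ [s]) * pathProd f (s :: β) := by
  intro α
  induction α with
  | nil => intro β; simp [pathProd_single']
  | cons a rest ih =>
    intro β
    cases rest with
    | nil =>
      show pathProd f (a :: s :: β) = pathProd f [a, s] * pathProd f (s :: β)
      rw [pathProd_cons', pathProd_cons', pathProd_single']
      ring
    | cons b rest' =>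
      show pathProd f (a :: b :: (rest' ++ s :: β))
          = pathProd f (a :: b :: (rest' ++ [s])) * pathProd f (s :: β)
      rw [pathProd_cons', pathProd_cons']
      have := ih β
      simp only [List.cons_append] at this
      rw [this]
      ring

lemma pathProd_pos {G : FinDAG S} {f : S → S → ℝ}
    (hf : ∀ s s', G.edge s s' → 0 < f s s') :
    ∀ τ : List S, τ.Chain' G.edge → 0 < pathProd f τ := by
  intro τ
  induction τ with
  | nil => intro _; norm_num [pathProd_nil']
  | cons a l ih =>
    cases l with
    | nil => intro _; norm_num [pathProd_single']
    | cons b l' =>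
      intro h
      obtain ⟨h1, h2⟩ := List.isChain_cons_cons.mp h
      rw [pathProd_cons']
      exact mul_pos (hf _ _ h1) (ih h2)

lemma getLastD_append_cons (s : S) (q : List S) :
    ∀ (p₀ : List S) (d : S), (p₀ ++ s :: q).getLastD d = (s :: q).getLastD d := by
  intro p₀
  induction p₀ with
  | nil => intro d; rfl
  | cons a t ih =>
    intro d
    show (a :: (t ++ s :: q)).getLastD d = (s :: q).getLastD d
    rw [List.getLastD_cons, ih a]
    exact getLastD_cons_eq _ _ _ _

lemma head?_append_cons' (p₀ : List S) (s : S) (q : List S) :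
    (p₀ ++ s :: q).head? = (p₀ ++ [s]).head? := by
  cases p₀ <;> simp

lemma children_nonempty' {G : FinDAG S} {s : S} (hs : ¬ G.Terminal s) :
    (G.children s).Nonempty := by
  rw [FinDAG.Terminal] at hs
  push_neg at hs
  obtain ⟨s', hs'⟩ := hs
  exact ⟨s', by simp [FinDAG.children, hs']⟩

lemma mem_children_edge {G : FinDAG S} {s s' : S} (h : s' ∈ G.children s) :
    G.edge s s' := (Finset.mem_filter.mp h).2

lemma bellman_exp {G : FinDAG S} {PB : S → S → ℝ} {R : S → ℝ} {V : S → ℝ}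
    (hPB : G.IsBackward PB) (hV : G.IsSoftValue PB R V)
    {s : S} (hs : ¬ G.Terminal s) :
    Real.exp (V s) = ∑ s' ∈ G.children s, PB s s' * Real.exp (V s') := by
  have hne := children_nonempty' hs
  have hpos : 0 < ∑ s' ∈ G.children s, Real.exp (Real.log (PB s s') + V s') :=
    Finset.sum_pos (fun i _ => Real.exp_pos _) hne
  rw [hV.2 s hs, Real.exp_log hpos]
  refine Finset.sum_congr rfl fun s' hs' => ?_
  rw [Real.exp_add, Real.exp_log (hPB.pos _ _ (mem_children_edge hs'))]

lemma exists_prefix (G : FinDAG S) {s : S} (h : Relation.ReflTransGen G.edge G.s0 s) :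
    ∃ p : List S, p.head? = some G.s0 ∧ p.Chain' G.edge ∧ p.getLast? = some s := by
  induction h with
  | refl => exact ⟨[G.s0], rfl, List.isChain_singleton _, rfl⟩
  | @tail b c _ hbc ih =>
    obtain ⟨p, h1, h2, h3⟩ := ih
    obtain ⟨p₀, rfl⟩ := List.getLast?_eq_some_iff.mp h3
    refine ⟨(p₀ ++ [b]) ++ [c], ?_, ?_, ?_⟩
    · rw [← h1]; cases p₀ <;> simp
    · refine List.isChain_append.mpr ?_
      refine ⟨h2, List.isChain_singleton _, ?_⟩
      intro x hx y hy
      simp only [List.head?_cons, Option.mem_def, Option.some.injEq] at hy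
      have hx' : b = x := by
        have hb : (p₀ ++ [b]).getLast? = some b := by
          rw [List.getLast?_eq_some_iff]; exact ⟨p₀, rfl⟩
        rw [hb] at hx
        simpa using hx
      rw [← hx', ← hy]
      exact hbc
    · rw [List.getLast?_eq_some_iff]; exact ⟨p₀ ++ [b], rfl⟩

lemma exists_suffix (G : FinDAG S) (s : S) :
    ∃ q : List S, q.head? = some s ∧ q.Chain' G.edge ∧ G.Terminal (q.getLastD G.s0) := by
  suffices h : ∀ n : ℕ, ∀ s : S, Finset.univ.sup G.rank + 1 - G.rank s ≤ n →
      ∃ q : List S, q.head? = some s ∧ q.Chain' G.edge ∧ G.Terminal (q.getLastD G.s0) by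
    exact h _ s le_rfl
  intro n
  induction n with
  | zero =>
    intro s h
    exfalso
    have : G.rank s ≤ Finset.univ.sup G.rank := Finset.le_sup (Finset.mem_univ s)
    omega
  | succ n ih =>
    intro s h
    by_cases ht : G.Terminal s
    · exact ⟨[s], rfl, List.isChain_singleton _,
        by simpa only [List.getLastD_cons, List.getLastD_nil] using ht⟩
    · obtain ⟨s', hs'⟩ := children_nonempty' ht
      have he : G.edge s s' := mem_children_edge hs'
      have hr := G.rank_lt he
      have hr2 : G.rank s ≤ Finset.univ.sup G.rank := Finset.le_sup (Finset.mem_univ s)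
      obtain ⟨q, hq1, hq2, hq3⟩ := ih s' (by omega)
      obtain ⟨q', rfl⟩ := head?_eq_cons hq1
      refine ⟨s :: s' :: q', rfl, List.isChain_cons_cons.mpr ⟨he, hq2⟩, ?_⟩
      simp only [List.getLastD_cons]
      simpa only [List.getLastD_cons] using hq3

lemma tele {G : FinDAG S} {PB : S → S → ℝ} (hPB : G.IsBackward PB) (V : S → ℝ) :
    ∀ (τ : List S) (a : S), τ.head? = some a → τ.Chain' G.edge →
      Real.exp (V a) * pathProd (G.softOpt PB V) τ
        = Real.exp (V (τ.getLastD a)) * pathProd PB τ := by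
  intro τ
  induction τ with
  | nil => intro a h _; simp at h
  | cons b l ih =>
    intro a h hc
    have hab : b = a := by simpa using h
    subst hab
    cases l with
    | nil => simp [pathProd_single', List.getLastD_cons]
    | cons c l' =>
      obtain ⟨hedge, hc2⟩ := List.isChain_cons_cons.mp hc
      have key : Real.exp (V b) * G.softOpt PB V b c = PB b c * Real.exp (V c) := by
        rw [FinDAG.softOpt, if_pos hedge, Real.exp_sub, Real.exp_add,
          Real.exp_log (hPB.pos _ _ hedge)]
        field_simp
      have ihc := ih c rfl hc2
      simp only [List.getLastD_cons] at ihc ⊢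
      rw [pathProd_cons', pathProd_cons']
      linear_combination pathProd (G.softOpt PB V) (c :: l') * key + PB b c * ihc

end AuxGFN

/-- GFlowNet reduction, Theorem `gflownet_reduction`.
Given the DAG `G`, backward policy `PB`, reward `R > 0` on terminals, and a solution `V`
of the soft Bellman equations of `M_G` (λ = 1), the softmax-optimal policy
`π*(s'|s) = exp(log P_B(s|s') + V(s') − V(s))` is a forward policy, it satisfies the
trajectory balance condition with `Z = exp V(s₀)`, and it is the unique forward policy
satisfying trajectory balance w.r.t. `PB` and `R`. -/
theorem gflownet_reduction
    {S : Type} [Fintype S] (G : FinDAG S) (PB : S → S → ℝ) (R : S → ℝ)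
    (hPB : G.IsBackward PB) (hR : ∀ x, G.Terminal x → 0 < R x)
    (hreach : ∀ s, Relation.ReflTransGen G.edge G.s0 s)
    (V : S → ℝ) (hV : G.IsSoftValue PB R V)
    (T : Finset (List S)) (hT : ∀ τ, τ ∈ T ↔ G.IsTraj τ) :
    G.IsForward (G.softOpt PB V) ∧
    (∀ τ ∈ T, Real.exp (V G.s0) * pathProd (G.softOpt PB V) τ
        = R (G.lastState τ) * pathProd PB τ) ∧
    (∀ PF : S → S → ℝ, G.IsForward PF →
      (∃ Z : ℝ, 0 < Z ∧
        ∀ τ ∈ T, Z * pathProd PF τ = R (G.lastState τ) * pathProd PB τ) →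
      ∀ s s', G.edge s s' → PF s s' = G.softOpt PB V s s') := by
  have hFwd : G.IsForward (G.softOpt PB V) := by
    refine ⟨?_, ?_, ?_⟩
    · intro s s' h; rw [FinDAG.softOpt, if_pos h]; exact Real.exp_pos _
    · intro s s' h; rw [FinDAG.softOpt, if_neg h]
    · intro s hs
      have hb := bellman_exp hPB hV hs
      have hterm : ∀ s' ∈ G.children s,
          G.softOpt PB V s s' = PB s s' * Real.exp (V s') / Real.exp (V s) := by
        intro s' hs'
        have he := mem_children_edge hs'
        rw [FinDAG.softOpt, if_pos he, Real.exp_sub, Real.exp_add,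
          Real.exp_log (hPB.pos _ _ he)]
      rw [Finset.sum_congr rfl hterm, ← Finset.sum_div, ← hb,
        div_self (Real.exp_ne_zero _)]
  have hTBopt : ∀ τ ∈ T, Real.exp (V G.s0) * pathProd (G.softOpt PB V) τ
      = R (G.lastState τ) * pathProd PB τ := by
    intro τ hτ
    obtain ⟨h1, h2, h3⟩ := (hT τ).mp hτ
    rw [tele hPB V τ G.s0 h1 h2]
    simp only [FinDAG.lastState]
    rw [hV.1 _ h3, Real.exp_log (hR _ h3)]
  refine ⟨hFwd, hTBopt, ?_⟩
  rintro PF hPF ⟨Z, hZpos, hZ⟩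
  -- Step A: for each state s, a constant K s relating suffix products.
  have hStepA : ∀ s : S, ∃ K : ℝ, 0 < K ∧ ∀ q : List S, q.head? = some s →
      q.Chain' G.edge → G.Terminal (q.getLastD G.s0) →
      pathProd PF q = K * (R (q.getLastD G.s0) * pathProd PB q) := by
    intro s
    obtain ⟨p, hp1, hp2, hp3⟩ := exists_prefix G (hreach s)
    obtain ⟨p₀, rfl⟩ := List.getLast?_eq_some_iff.mp hp3
    have hBpos : 0 < pathProd PB (p₀ ++ [s]) := pathProd_pos hPB.pos _ hp2
    have hFpos : 0 < pathProd PF (p₀ ++ [s]) := pathProd_pos hPF.pos _ hp2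
    refine ⟨pathProd PB (p₀ ++ [s]) / (Z * pathProd PF (p₀ ++ [s])), by positivity, ?_⟩
    intro q hq1 hq2 hq3
    obtain ⟨q', rfl⟩ := head?_eq_cons hq1
    have hchain : (p₀ ++ s :: q').Chain' G.edge := by
      refine List.isChain_append.mpr ?_
      obtain ⟨ha, _, hc⟩ := List.isChain_append.mp hp2
      refine ⟨ha, hq2, ?_⟩
      intro x hx y hy
      simp only [List.head?_cons, Option.mem_def, Option.some.injEq] at hy
      rw [← hy]
      exact hc x hx s rfl
    have hτT : (p₀ ++ s :: q') ∈ T := by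
      rw [hT]
      refine ⟨?_, hchain, ?_⟩
      · rw [head?_append_cons', hp1]
      · rw [getLastD_append_cons]; exact hq3
    have htb := hZ _ hτT
    simp only [FinDAG.lastState] at htb
    rw [getLastD_append_cons, pathProd_glue PF s p₀ q', pathProd_glue PB s p₀ q'] at htb
    rw [div_mul_eq_mul_div, eq_div_iff (by positivity : Z * pathProd PF (p₀ ++ [s]) ≠ 0)]
    linear_combination htb
  choose K hKpos hKeq using hStepA
  -- Step C': the key edge relation.
  have hCC : ∀ s s', G.edge s s' → PF s s' * K s' = K s * PB s s' := by
    intro s s' he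
    obtain ⟨q, hq1, hq2, hq3⟩ := exists_suffix G s'
    obtain ⟨q'', rfl⟩ := head?_eq_cons hq1
    have h2 := hKeq s' (s' :: q'') rfl hq2 hq3
    have hterm2 : G.Terminal ((s :: s' :: q'').getLastD G.s0) := by
      simp only [List.getLastD_cons]
      simpa only [List.getLastD_cons] using hq3
    have h1 := hKeq s (s :: s' :: q'') rfl (List.isChain_cons_cons.mpr ⟨he, hq2⟩) hterm2
    rw [pathProd_cons' PF s s' q'', pathProd_cons' PB s s' q''] at h1
    simp only [List.getLastD_cons] at h1 h2
    rw [h2] at h1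
    have hq3' : G.Terminal (q''.getLastD s') := by
      simpa only [List.getLastD_cons] using hq3
    have hx : 0 < R (q''.getLastD s') := hR _ hq3'
    have hB : 0 < pathProd PB (s' :: q'') := pathProd_pos hPB.pos _ hq2
    apply mul_right_cancel₀
      (show R (q''.getLastD s') * pathProd PB (s' :: q'') ≠ 0 by positivity)
    linear_combination h1
  -- Step B: K s = exp (-(V s)).
  have hKval : ∀ n : ℕ, ∀ s : S, Finset.univ.sup G.rank + 1 - G.rank s ≤ n →
      K s * Real.exp (V s) = 1 := by
    intro n
    induction n with
    | zero =>
      intro s h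
      exfalso
      have : G.rank s ≤ Finset.univ.sup G.rank := Finset.le_sup (Finset.mem_univ s)
      omega
    | succ n ih =>
      intro s h
      by_cases ht : G.Terminal s
      · have hterm : G.Terminal (([s] : List S).getLastD G.s0) := by
          simpa only [List.getLastD_cons, List.getLastD_nil] using ht
        have h1 := hKeq s [s] rfl (List.isChain_singleton _) hterm
        rw [pathProd_single', pathProd_single'] at h1
        simp only [List.getLastD_cons, List.getLastD_nil] at h1
        rw [hV.1 s ht, Real.exp_log (hR s ht)]
        linear_combination -h1
      · have hchild : ∀ s' ∈ G.children s,
            PF s s' = K s * (PB s s' * Real.exp (V s')) := by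
          intro s' hs'
          have he := mem_children_edge hs'
          have hr := G.rank_lt he
          have hr2 : G.rank s ≤ Finset.univ.sup G.rank := Finset.le_sup (Finset.mem_univ s)
          have h2 := ih s' (by omega)
          have h1 := hCC s s' he
          have hK' : K s' ≠ 0 := (hKpos s').ne'
          have hE : Real.exp (V s') = (K s')⁻¹ := by
            field_simp
            linear_combination h2
          rw [hE]
          field_simp
          linear_combination h1
        have hsum := hPF.sum_one s ht
        rw [Finset.sum_congr rfl hchild, ← Finset.mul_sum, ← bellman_exp hPB hV ht] at hsum
        exact hsum
  have hKfin : ∀ s, K s * Real.exp (V s) = 1 := fun s => hKval _ s le_rfl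
  intro s s' he
  have hs := hKfin s
  have hs' := hKfin s'
  have h1 := hCC s s' he
  rw [FinDAG.softOpt, if_pos he, Real.exp_sub, Real.exp_add,
    Real.exp_log (hPB.pos _ _ he)]
  rw [eq_div_iff (Real.exp_ne_zero _)]
  linear_combination (Real.exp (V s) * Real.exp (V s')) * h1
    + (PB s s' * Real.exp (V s')) * hs - (PF s s' * Real.exp (V s)) * hs'
end
end

section
/- Under the construction of the MDP M_G from a DAG G, backward policy P_B, and GFlowNet reward R (rewards r(s,s') = log P_B(s|s') for non-terminal edges, r(x,s_f) = log R(x) for x ∈ X), for every state s ≠ s_f the optimal entropy-regularized (λ=1) value satisfies V*₁(s) = log F(s), and for every edge (s,s') with s' ≠ s_f the optimal soft Q-value satisfies Q*₁(s,s') = log F(s → s'), where F is the Markovian flow defined by P_B and R: F(x) = R(x) for x ∈ X, F(s → s') = P_B(s|s') F(s'), and F(s) = Σ_{s' child of s} F(s → s') for non-terminal s. -/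
/- Common setup: finite DAGs, policies, trajectories, GFlowNet notions. -/

noncomputable section
open scoped Classical
open Finset Real

variable {S : Type} [Fintype S]

/-!
Induct from the terminal states towards `s0`, i.e. along the reversed edges, which is
well founded because the rank grows along edges. At a terminal state both `V` and `log F`
equal `log R`. At an interior state, once `V s' = log F s'` with `F s' > 0` for every child,
each soft Bellman summand `exp (log P_B(s|s') + V s')` is the edge flow `P_B(s|s') F(s')`,
so `V s` is the log of the flow-matching sum defining `F s`.
-/

namespace FinDAG

variable (G : FinDAG S)

theorem wellFounded_swap_edge : WellFounded (Function.swap G.edge) := by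
  let N := univ.sup G.rank
  refine Subrelation.wf (fun {s' s} (hedge : G.edge s s') => ?_) (measure fun s => N - G.rank s).wf
  have hlt := G.rank_lt hedge
  have hle : G.rank s' ≤ N := le_sup (mem_univ s')
  change N - G.rank s' < N - G.rank s
  omega

theorem children_nonempty {s : S} (hs : ¬ G.Terminal s) : (G.children s).Nonempty := by
  simp only [Terminal, not_forall, not_not] at hs
  obtain ⟨s', hedge⟩ := hs
  exact ⟨s', mem_filter.mpr ⟨mem_univ s', hedge⟩⟩

theorem flow_pos_and_softValue_eq_log {PB : S → S → ℝ} {R V F : S → ℝ}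
    (hPB : ∀ s s', G.edge s s' → 0 < PB s s') (hR : ∀ x, G.Terminal x → 0 < R x)
    (hV : G.IsSoftValue PB R V) (hF : G.IsFlow PB R F) (s : S) :
    0 < F s ∧ V s = log (F s) := by
  induction s using G.wellFounded_swap_edge.induction with
  | _ s ih =>
  by_cases hs : G.Terminal s
  · rw [hF.1 s hs, hV.1 s hs]
    exact ⟨hR s hs, rfl⟩
  have hedge : ∀ s' ∈ G.children s, G.edge s s' := fun s' hs' => (mem_filter.mp hs').2
  have hsummand : ∀ s' ∈ G.children s, exp (log (PB s s') + V s') = PB s s' * F s' := by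
    intro s' hs'
    obtain ⟨hFpos, hVeq⟩ := ih s' (hedge s' hs')
    rw [hVeq, exp_add, exp_log (hPB s s' (hedge s' hs')), exp_log hFpos]
  refine ⟨?_, ?_⟩
  · rw [hF.2 s hs]
    exact sum_pos (fun s' hs' => mul_pos (hPB s s' (hedge s' hs')) (ih s' (hedge s' hs')).1)
      (G.children_nonempty hs)
  · rw [hV.2 s hs, sum_congr rfl hsummand, ← hF.2 s hs]

end FinDAG

/-- In `M_G`, the optimal soft value (λ = 1) equals the log-flow:
`V*₁(s) = log F(s)` for every state `s ≠ s_f`, and the optimal soft Q-value on every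
DAG edge equals the log edge-flow: `Q*₁(s,s') = r(s,s') + V*₁(s') = log F(s→s')`
where `F(s→s') = P_B(s|s') F(s')`. -/
theorem soft_value_is_log_flow
    {S : Type} [Fintype S] (G : FinDAG S) (PB : S → S → ℝ) (R : S → ℝ)
    (hPB : G.IsBackward PB) (hR : ∀ x, G.Terminal x → 0 < R x)
    (V : S → ℝ) (hV : G.IsSoftValue PB R V)
    (F : S → ℝ) (hF : G.IsFlow PB R F) :
    (∀ s : S, V s = Real.log (F s)) ∧
    (∀ s s' : S, G.edge s s' →
      Real.log (PB s s') + V s' = Real.log (PB s s' * F s')) := by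
  have key := G.flow_pos_and_softValue_eq_log hPB.pos hR hV hF
  refine ⟨fun s => (key s).2, fun s s' hedge => ?_⟩
  rw [(key s').2, log_mul (hPB.pos s s' hedge).ne' (key s').1.ne']
end
end

section
/- The optimal value V*₁(s₀) of the MDP M_G (constructed from DAG G, backward policy P_B, and GFlowNet reward R, with λ = 1) equals log Z, where Z = Σ_{x ∈ X} R(x), and the optimal trajectory distribution q^{π*₁} equals P_B(τ) = (R(x_τ)/Z) ∏_{i} P_B(s_{i-1}|s_i) for all complete trajectories τ. -/
/- Common setup: finite DAGs, policies, trajectories, GFlowNet notions. -/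

noncomputable section
open scoped Classical
open Finset Real

variable {S : Type} [Fintype S]

private lemma tele_s5 {S : Type} [Fintype S] (G : FinDAG S) (PB : S → S → ℝ) (V : S → ℝ)
    (hpos : ∀ s s', G.edge s s' → 0 < PB s s') :
    ∀ (l : List S) (a : S), List.Chain G.edge a l →
      pathProd (G.softOpt PB V) (a :: l)
        = pathProd PB (a :: l) * Real.exp (V (l.getLastD a)) / Real.exp (V a)
  | [], a, _ => by simp [pathProd]
  | b :: l, a, h => by
    rcases List.chain_cons.mp h with ⟨hab, hb⟩
    have ih := tele_s5 G PB V hpos l b hb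
    have h1 : pathProd (G.softOpt PB V) (a :: b :: l)
        = G.softOpt PB V a b * pathProd (G.softOpt PB V) (b :: l) := by
      simp [pathProd]
    have h2 : pathProd PB (a :: b :: l) = PB a b * pathProd PB (b :: l) := by
      simp [pathProd]
    rw [h1, h2, ih, List.getLastD_cons]
    unfold FinDAG.softOpt
    rw [if_pos hab, Real.exp_sub, Real.exp_add, Real.exp_log (hpos _ _ hab)]
    have e1 := Real.exp_ne_zero (V a)
    have e2 := Real.exp_ne_zero (V b)
    field_simp

/-- The optimal value of `M_G` (λ = 1) at `s₀` is `log Z`, where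
`Z = ∑_{x∈X} R(x)`, and the optimal trajectory distribution `q^{π*₁}` equals
`P_B(τ) = (R(x_τ)/Z) ∏ P_B(s_{i-1}|s_i)` on all complete trajectories. -/
theorem optimal_value_eq_logZ_and_opt_traj_dist
    {S : Type} [Fintype S] (G : FinDAG S) (PB : S → S → ℝ) (R : S → ℝ)
    (hPB : G.IsBackward PB) (hR : ∀ x, G.Terminal x → 0 < R x)
    (hparents : ∀ s, s ≠ G.s0 → (G.parents s).Nonempty)
    (V : S → ℝ) (hV : G.IsSoftValue PB R V)
    (T : Finset (List S)) (hT : ∀ τ, τ ∈ T ↔ G.IsTraj τ)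
    (Z : ℝ) (hZ : Z = ∑ x ∈ G.X, R x) :
    V G.s0 = Real.log Z ∧
    ∀ τ ∈ T, pathProd (G.softOpt PB V) τ
        = R (G.lastState τ) / Z * pathProd PB τ := by
  classical
  set F : S → ℝ := fun s => Real.exp (V s) with hF
  have hFterm : ∀ x, G.Terminal x → F x = R x := by
    intro x hx
    simp only [hF]
    rw [hV.1 x hx, Real.exp_log (hR x hx)]
  have hFnon : ∀ s, ¬ G.Terminal s → F s = ∑ s' ∈ G.children s, PB s s' * F s' := by
    intro s hs
    have hchild : (G.children s).Nonempty := by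
      rw [FinDAG.Terminal] at hs; push_neg at hs
      obtain ⟨s', hs'⟩ := hs
      exact ⟨s', by simp [FinDAG.children, hs']⟩
    have hterms : ∀ s' ∈ G.children s,
        Real.exp (Real.log (PB s s') + V s') = PB s s' * F s' := by
      intro s' hs'
      have he : G.edge s s' := by simpa [FinDAG.children] using hs'
      rw [Real.exp_add, Real.exp_log (hPB.pos _ _ he)]
    have hsum : (0:ℝ) < ∑ s' ∈ G.children s, Real.exp (Real.log (PB s s') + V s') :=
      Finset.sum_pos (fun s' _ => Real.exp_pos _) hchild
    calc F s = Real.exp (V s) := rfl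
      _ = Real.exp (Real.log (∑ s' ∈ G.children s,
            Real.exp (Real.log (PB s s') + V s'))) := by rw [hV.2 s hs]
      _ = ∑ s' ∈ G.children s, Real.exp (Real.log (PB s s') + V s') := Real.exp_log hsum
      _ = ∑ s' ∈ G.children s, PB s s' * F s' := Finset.sum_congr rfl hterms
  -- parents of s0 are empty
  have hrank : ∀ a b, Relation.TransGen G.edge a b → G.rank a < G.rank b := by
    intro a b h
    induction h with
    | single h => exact G.rank_lt h
    | tail _ h ih => exact ih.trans (G.rank_lt h)
  have reach : ∀ n s, G.rank s ≤ n → s = G.s0 ∨ Relation.TransGen G.edge G.s0 s := by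
    intro n
    induction n with
    | zero =>
      intro s hs
      by_cases h : s = G.s0
      · exact Or.inl h
      · obtain ⟨p, hp⟩ := hparents s h
        have he : G.edge p s := by simpa [FinDAG.parents] using hp
        exact absurd (G.rank_lt he) (by omega)
    | succ n ih =>
      intro s hs
      by_cases h : s = G.s0
      · exact Or.inl h
      · obtain ⟨p, hp⟩ := hparents s h
        have he : G.edge p s := by simpa [FinDAG.parents] using hp
        have hpn : G.rank p ≤ n := by have := G.rank_lt he; omega
        rcases ih p hpn with h' | h'
        · exact Or.inr (Relation.TransGen.single (h' ▸ he))
        · exact Or.inr (h'.tail he)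
  have hpar0 : G.parents G.s0 = ∅ := by
    by_contra h
    obtain ⟨p, hp⟩ := Finset.nonempty_of_ne_empty h
    have he : G.edge p G.s0 := by simpa [FinDAG.parents] using hp
    rcases reach (G.rank p) p le_rfl with h' | h'
    · exact absurd (G.rank_lt (h' ▸ he)) (lt_irrefl _)
    · exact absurd (hrank _ _ (h'.tail he)) (lt_irrefl _)
  -- flow conservation
  have hA : ∀ s : S, (∑ s' : S, if G.edge s s' then PB s s' * F s' else 0)
      = if G.Terminal s then 0 else F s := by
    intro s
    by_cases hs : G.Terminal s
    · rw [if_pos hs]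
      exact Finset.sum_eq_zero fun s' _ => if_neg (hs s')
    · rw [if_neg hs, hFnon s hs, FinDAG.children, Finset.sum_filter]
  have hB : ∀ s' : S, (∑ s : S, if G.edge s s' then PB s s' * F s' else 0)
      = if s' = G.s0 then 0 else F s' := by
    intro s'
    by_cases h : s' = G.s0
    · subst h
      rw [if_pos rfl]
      refine Finset.sum_eq_zero fun s _ => if_neg fun he => ?_
      have : s ∈ G.parents G.s0 := by simp [FinDAG.parents, he]
      simp [hpar0] at this
    · rw [if_neg h]
      have h2 : (∑ s ∈ G.parents s', PB s s' * F s')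
          = ∑ s : S, if G.edge s s' then PB s s' * F s' else 0 := by
        rw [FinDAG.parents, Finset.sum_filter]
      rw [← h2, ← Finset.sum_mul, hPB.sum_one s' (hparents s' h), one_mul]
  have hswap : (∑ s : S, if G.Terminal s then (0:ℝ) else F s)
      = ∑ s' : S, if s' = G.s0 then (0:ℝ) else F s' := by
    calc (∑ s : S, if G.Terminal s then (0:ℝ) else F s)
        = ∑ s : S, ∑ s' : S, if G.edge s s' then PB s s' * F s' else 0 :=
          (Finset.sum_congr rfl fun s _ => (hA s).symm)
      _ = ∑ s' : S, ∑ s : S, if G.edge s s' then PB s s' * F s' else 0 :=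
          Finset.sum_comm
      _ = ∑ s' : S, if s' = G.s0 then (0:ℝ) else F s' :=
          Finset.sum_congr rfl fun s' _ => hB s'
  have e1 : (∑ s : S, if G.Terminal s then (0:ℝ) else F s)
      = (∑ s : S, F s) - ∑ x ∈ G.X, F x := by
    rw [FinDAG.X, Finset.sum_filter, ← Finset.sum_sub_distrib]
    refine Finset.sum_congr rfl fun s _ => ?_
    by_cases h : G.Terminal s <;> simp [h]
  have e2 : (∑ s' : S, if s' = G.s0 then (0:ℝ) else F s')
      = (∑ s : S, F s) - F G.s0 := by
    have h3 : (∑ s' : S, if s' = G.s0 then F s' else 0) = F G.s0 := by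
      rw [Finset.sum_ite_eq' Finset.univ G.s0 F, if_pos (Finset.mem_univ _)]
    rw [← h3, ← Finset.sum_sub_distrib]
    refine Finset.sum_congr rfl fun s _ => ?_
    by_cases h : s = G.s0 <;> simp [h]
  have key : F G.s0 = Z := by
    have hXF : (∑ x ∈ G.X, F x) = ∑ x ∈ G.X, R x := by
      refine Finset.sum_congr rfl fun x hx => hFterm x ?_
      simpa [FinDAG.X] using hx
    have := hswap
    rw [e1, e2] at this
    have : F G.s0 = ∑ x ∈ G.X, F x := by linarith
    rw [this, hXF, hZ]
  have hZpos : 0 < Z := key ▸ Real.exp_pos _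
  constructor
  · rw [← key]
    simp only [hF]
    rw [Real.log_exp]
  · intro τ hτ
    obtain ⟨hhead, hchain, hterm⟩ := (hT τ).mp hτ
    obtain ⟨l, rfl⟩ : ∃ l, τ = G.s0 :: l := by
      cases τ with
      | nil => simp at hhead
      | cons a l =>
        simp only [List.head?_cons, Option.some_inj] at hhead
        exact ⟨l, by rw [hhead]⟩
    have hchain' : List.Chain G.edge G.s0 l := hchain
    have hlast : G.lastState (G.s0 :: l) = l.getLastD G.s0 := by
      show (G.s0 :: l).getLastD G.s0 = _
      rw [List.getLastD_cons]
    have htermlast : G.Terminal (l.getLastD G.s0) := by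
      rwa [List.getLastD_cons] at hterm
    rw [tele_s5 G PB V hPB.pos l G.s0 hchain', hlast]
    have hRlast : Real.exp (V (l.getLastD G.s0)) = R (l.getLastD G.s0) :=
      hFterm _ htermlast
    have hZ0 : Real.exp (V G.s0) = Z := key
    rw [hRlast, hZ0]
    ring
end
end

section
/- Under the dueling parameterization Q_θ(s,s') = V_θ(s) + A_θ(s,s') − logsumexp_{s''}(A_θ(s,s'')), with interpretation V_θ(s) = log F_θ(s) and π_θ(s'|s) = softmax of Q_θ(s,·), the soft DQN regression target identity log F_θ(s→s') = log P_B(s|s') + log F_{θ̄}(s') becomes log(P_F(s'|s,θ) F_θ(s)) = log(P_B(s|s') F_{θ̄}(s')), so the squared soft-DQN loss on a transition equals the GFlowNet detailed balance loss (log [P_F(s'|s,θ) F_θ(s) / (P_B(s|s') F_{θ̄}(s'))])² with fixed backward policy. -/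
/-!
The dueling correction `- logsumexp A_θ` makes `logsumexp Q_θ = V_θ`, so the softmax
normaliser of `Q_θ` is exactly `exp V_θ` and `π_θ(s') · exp V_θ = exp Q_θ(s')`. The edge flow
of soft DQN is therefore `P_F · F_θ(s)`, and the two squared losses coincide term by term.
-/

open Real Finset

theorem Finset.sum_exp_add_sub_log_sum_exp {ι : Type*} (s : Finset ι) (hs : s.Nonempty)
    (v : ℝ) (f : ι → ℝ) :
    ∑ i ∈ s, exp (v + f i - log (∑ j ∈ s, exp (f j))) = exp v := by
  have hpos : 0 < ∑ j ∈ s, exp (f j) := sum_pos (fun j _ => exp_pos (f j)) hs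
  simp_rw [exp_sub, exp_add, exp_log hpos]
  rw [← sum_div, ← mul_sum, mul_div_cancel_right₀ _ hpos.ne']

theorem softmax_mul_exp_eq_exp_of_sum_exp_eq {ι : Type*} [Fintype ι] {v : ℝ} {q : ι → ℝ}
    (hq : ∑ i, exp (q i) = exp v) (i : ι) :
    (exp (q i) / ∑ j, exp (q j)) * exp v = exp (q i) := by
  rw [hq, div_mul_cancel₀ _ (exp_pos v).ne']

theorem dueling_softdqn_loss_is_detailed_balance_general
    {A : Type} [Fintype A]
    (Vθ : ℝ) (Aθ Qθ πθ : A → ℝ)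
    (hQ : ∀ a, Qθ a = Vθ + Aθ a - Real.log (∑ a', Real.exp (Aθ a')))
    (hπ : ∀ a, πθ a = Real.exp (Qθ a) / ∑ a', Real.exp (Qθ a'))
    (PB Fbar : A → ℝ) (hPB : ∀ a, 0 < PB a) (hF : ∀ a, 0 < Fbar a) :
    ∀ a, (Real.log (Real.exp (Qθ a)) - (Real.log (PB a) + Real.log (Fbar a)))^2
        = (Real.log (πθ a * Real.exp Vθ) - Real.log (PB a * Fbar a))^2 := by
  intro a
  have hlogsumexp : ∑ a', exp (Qθ a') = exp Vθ := by
    simp_rw [hQ]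
    exact sum_exp_add_sub_log_sum_exp univ ⟨a, mem_univ a⟩ Vθ Aθ
  rw [hπ a, softmax_mul_exp_eq_exp_of_sum_exp_eq hlogsumexp, log_mul (hPB a).ne' (hF a).ne']

/-- dueling Soft DQN loss = detailed balance loss. Fix a state `s` with
action (child) set `A`. Under the dueling parameterization
`Q_θ(s') = V_θ + A_θ(s') − logsumexp A_θ`, with `π_θ = softmax Q_θ` (the forward policy
`P_F(·|s,θ)`) and edge flow `F_θ(s→s') = exp Q_θ(s')`, `F_θ(s) = exp V_θ`, the soft-DQN
squared regression loss on a transition `s → s'` with target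
`log P_B(s|s') + log F_{θ̄}(s')` equals the GFlowNet detailed-balance loss
`(log[P_F(s'|s,θ) F_θ(s)] − log[P_B(s|s') F_{θ̄}(s')])²`. -/
theorem dueling_softdqn_loss_is_detailed_balance
    {A : Type} [Fintype A] [Nonempty A]
    (Vθ : ℝ) (Aθ Qθ πθ : A → ℝ)
    (hQ : ∀ a, Qθ a = Vθ + Aθ a - Real.log (∑ a', Real.exp (Aθ a')))
    (hπ : ∀ a, πθ a = Real.exp (Qθ a) / ∑ a', Real.exp (Qθ a'))
    (PB Fbar : A → ℝ) (hPB : ∀ a, 0 < PB a) (hF : ∀ a, 0 < Fbar a) :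
    ∀ a, (Real.log (Real.exp (Qθ a)) - (Real.log (PB a) + Real.log (Fbar a)))^2
        = (Real.log (πθ a * Real.exp Vθ) - Real.log (PB a * Fbar a))^2 :=
  dueling_softdqn_loss_is_detailed_balance_general Vθ Aθ Qθ πθ hQ hπ PB Fbar hPB hF
end

section
/- Let π_θ be a parameterized forward policy on the DAG G with full support and let P_B, R define the trajectory distribution P_B(τ) = (R(x_τ)/Z)∏ P_B(s_{i-1}|s_i). Then the gradient of the regularized value satisfies −∇_θ V^{π_θ}₁(s₀) = ∇_θ KL(q^{π_θ} ‖ P_B) = (1/2) E_{τ∼π_θ}[∇_θ L_TB(τ)], where L_TB(τ) = (log[Z_θ ∏_i π_θ(s_i|s_{i-1})] − log[R(x_τ) ∏_i P_B(s_{i-1}|s_i)])² is the trajectory balance loss with Z_θ = Z (the true partition function) held at the optimum baseline; i.e., on-policy trajectory balance gradient equals twice the negative policy gradient. -/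
/- Common setup: finite DAGs, policies, trajectories, GFlowNet notions. -/

noncomputable section
open scoped Classical
open Finset Real

variable {S : Type} [Fintype S]

/-- Entropy-regularized (λ = 1) value of policy `pol` at `s₀` in `M_G`. -/
def regValue {S : Type} [Fintype S] (G : FinDAG S) (PB : S → S → ℝ) (R : S → ℝ)
    (pol : S → S → ℝ) (T : Finset (List S)) : ℝ :=
  ∑ τ ∈ T, pathProd pol τ *
    ((pathSum (fun s s' => Real.log (PB s s')) τ + Real.log (R (G.lastState τ)))
      - Real.log (pathProd pol τ))

/-! ### Auxiliary lemmas -/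

section TBAux

variable {S : Type} [Fintype S]

lemma chain'_zip {r : S → S → Prop} :
    ∀ (τ : List S), τ.Chain' r → ∀ p ∈ τ.zip τ.tail, r p.1 p.2
  | [] => by simp
  | [a] => by simp
  | a :: b :: l => fun h p hp => by
      replace h := List.isChain_cons_cons.mp h
      simp only [List.tail_cons, List.zip_cons_cons, List.mem_cons] at hp
      rcases hp with rfl | hp
      · exact h.1
      · exact chain'_zip (b :: l) h.2 p (by simpa using hp)

lemma pathProd_pos_s10 {f : S → S → ℝ} {τ : List S}
    (h : ∀ p ∈ τ.zip τ.tail, 0 < f p.1 p.2) : 0 < pathProd f τ := by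
  unfold pathProd
  apply List.prod_pos
  intro x hx
  rw [List.mem_map] at hx
  obtain ⟨p, hp, rfl⟩ := hx
  exact h p hp

lemma log_prod_list : ∀ (l : List ℝ), (∀ x ∈ l, 0 < x) →
    Real.log l.prod = (l.map Real.log).sum
  | [], _ => by simp
  | a :: l, h => by
      simp only [List.prod_cons, List.map_cons, List.sum_cons]
      rw [Real.log_mul (ne_of_gt (h a (by simp)))
          (ne_of_gt (List.prod_pos (fun x hx => h x (by simp [hx])))),
        log_prod_list l (fun x hx => h x (by simp [hx]))]

lemma log_pathProd {f : S → S → ℝ} {τ : List S}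
    (h : ∀ p ∈ τ.zip τ.tail, 0 < f p.1 p.2) :
    pathSum (fun s s' => Real.log (f s s')) τ = Real.log (pathProd f τ) := by
  unfold pathSum pathProd
  rw [log_prod_list _ (by
    intro x hx
    rw [List.mem_map] at hx
    obtain ⟨p, hp, rfl⟩ := hx
    exact h p hp), List.map_map]
  rfl

lemma nodup_of_chain' (G : FinDAG S) {τ : List S} (h : τ.Chain' G.edge) : τ.Nodup := by
  have h1 : (τ.map G.rank).Chain' (· < ·) :=
    (List.isChain_map G.rank).mpr (h.imp fun a b hab => G.rank_lt hab)
  have h2 : (τ.map G.rank).Pairwise (· < ·) := List.isChain_iff_pairwise.mp h1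
  exact List.Nodup.of_map G.rank (h2.imp fun h => ne_of_lt h)

/-- A trajectory starting from `s`. -/
def IsTrajFrom (G : FinDAG S) (s : S) (τ : List S) : Prop :=
  τ.head? = some s ∧ τ.Chain' G.edge ∧ G.Terminal (τ.getLastD G.s0)

/-- The (finite) set of trajectories starting from `s`. -/
def trajFrom (G : FinDAG S) (s : S) : Finset (List S) :=
  ((Finset.univ : Finset {l : List S // l.Nodup}).image Subtype.val).filter
    (fun τ => IsTrajFrom G s τ)

lemma mem_trajFrom {G : FinDAG S} {s : S} {τ : List S} :
    τ ∈ trajFrom G s ↔ IsTrajFrom G s τ := by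
  unfold trajFrom
  simp only [Finset.mem_filter, Finset.mem_image, Finset.mem_univ, true_and]
  constructor
  · rintro ⟨-, h⟩; exact h
  · intro h; exact ⟨⟨⟨τ, nodup_of_chain' G h.2.1⟩, rfl⟩, h⟩

lemma pathProd_cons_cons (f : S → S → ℝ) (s a : S) (l : List S) :
    pathProd f (s :: a :: l) = f s a * pathProd f (a :: l) := by
  simp [pathProd]

lemma sum_trajFrom (G : FinDAG S) {pf : S → S → ℝ} (hp : G.IsForward pf) (s : S) :
    ∑ τ ∈ trajFrom G s, pathProd pf τ = 1 := by
  have key : ∀ n : ℕ, ∀ s : S, (Finset.univ.sup G.rank) - G.rank s < n →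
      ∑ τ ∈ trajFrom G s, pathProd pf τ = 1 := by
    intro n
    induction n with
    | zero => intro s hs; omega
    | succ n ih =>
      intro s hs
      by_cases hterm : G.Terminal s
      · have hset : trajFrom G s = {[s]} := by
          ext τ
          simp only [mem_trajFrom, Finset.mem_singleton, IsTrajFrom]
          constructor
          · rintro ⟨h1, h2, h3⟩
            cases τ with
            | nil => simp at h1
            | cons a l =>
              simp only [List.head?_cons, Option.some.injEq] at h1
              subst h1
              cases l with
              | nil => rfl
              | cons b l' => exact absurd (List.isChain_cons_cons.mp h2).1 (hterm b)
          · rintro rfl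
            refine ⟨rfl, List.isChain_singleton s, ?_⟩
            simpa [List.getLastD] using hterm
        rw [hset]
        simp [pathProd]
      · have hdec : trajFrom G s =
            (G.children s).biUnion (fun s' => (trajFrom G s').image (List.cons s)) := by
          ext τ
          simp only [mem_trajFrom, IsTrajFrom, Finset.mem_biUnion, Finset.mem_image]
          constructor
          · rintro ⟨h1, h2, h3⟩
            cases τ with
            | nil => simp at h1
            | cons a l =>
              simp only [List.head?_cons, Option.some.injEq] at h1
              subst h1
              cases l with
              | nil => simp only [List.getLastD] at h3; exact absurd h3 hterm
              | cons b l' =>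
                replace h2 := List.isChain_cons_cons.mp h2
                refine ⟨b, ?_, b :: l', ⟨rfl, h2.2, ?_⟩, rfl⟩
                · simp only [FinDAG.children, Finset.mem_filter, Finset.mem_univ, true_and]
                  exact h2.1
                · simpa [List.getLastD_cons] using h3
          · rintro ⟨s', hs', τ', ⟨h1, h2, h3⟩, rfl⟩
            simp only [FinDAG.children, Finset.mem_filter, Finset.mem_univ, true_and] at hs'
            cases τ' with
            | nil => simp at h1
            | cons a l =>
              simp only [List.head?_cons, Option.some.injEq] at h1
              subst h1
              exact ⟨rfl, List.isChain_cons_cons.mpr ⟨hs', h2⟩,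
                by simpa [List.getLastD_cons] using h3⟩
        have hdisj : (↑(G.children s) : Set S).PairwiseDisjoint
            (fun s' => (trajFrom G s').image (List.cons s)) := by
          intro x hx y hy hxy
          simp only [Function.onFun, Finset.disjoint_left]
          rintro τ hτx hτy
          simp only [Finset.mem_image] at hτx hτy
          obtain ⟨τ1, h1, rfl⟩ := hτx
          obtain ⟨τ2, h2, heq⟩ := hτy
          have hτeq : τ2 = τ1 := by simpa using heq
          subst hτeq
          have e1 := (mem_trajFrom.mp h1).1
          have e2 := (mem_trajFrom.mp h2).1
          rw [e1] at e2
          exact hxy (Option.some.inj e2)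
        rw [hdec, Finset.sum_biUnion hdisj]
        have hinner : ∀ s' ∈ G.children s,
            ∑ τ ∈ (trajFrom G s').image (List.cons s), pathProd pf τ = pf s s' := by
          intro s' hs'
          have hch : G.edge s s' := by
            simpa [FinDAG.children] using hs'
          rw [Finset.sum_image (by
            intro x _ y _ hxy
            simpa using hxy)]
          have hrank : (Finset.univ.sup G.rank) - G.rank s' < n := by
            have h1 : G.rank s < G.rank s' := G.rank_lt hch
            have h2 : G.rank s' ≤ Finset.univ.sup G.rank :=
              Finset.le_sup (Finset.mem_univ s')
            omega
          calc ∑ τ' ∈ trajFrom G s', pathProd pf (s :: τ')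
              = ∑ τ' ∈ trajFrom G s', pf s s' * pathProd pf τ' := by
                apply Finset.sum_congr rfl
                intro τ' hτ'
                obtain ⟨h1, -, -⟩ := mem_trajFrom.mp hτ'
                cases τ' with
                | nil => simp at h1
                | cons a l =>
                  simp only [List.head?_cons, Option.some.injEq] at h1
                  subst h1
                  exact pathProd_cons_cons pf s a l
            _ = pf s s' * 1 := by rw [← Finset.mul_sum, ih s' hrank]
            _ = pf s s' := mul_one _
        rw [Finset.sum_congr rfl hinner]
        exact hp.sum_one s hterm
  exact key ((Finset.univ.sup G.rank) - G.rank s + 1) s (by omega)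

lemma diff_prod_list (pol : ℝ → S → S → ℝ)
    (hdiff : ∀ s s', Differentiable ℝ (fun θ => pol θ s s')) :
    ∀ (l : List (S × S)), Differentiable ℝ (fun θ => (l.map fun p => pol θ p.1 p.2).prod)
  | [] => by simpa using differentiable_const (1 : ℝ)
  | p :: l => by
      simp only [List.map_cons, List.prod_cons]
      exact (hdiff p.1 p.2).mul (diff_prod_list pol hdiff l)

lemma diff_pathProd (pol : ℝ → S → S → ℝ)
    (hdiff : ∀ s s', Differentiable ℝ (fun θ => pol θ s s')) (τ : List S) :
    Differentiable ℝ (fun θ => pathProd (pol θ) τ) := by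
  unfold pathProd
  exact diff_prod_list pol hdiff (τ.zip τ.tail)

end TBAux

/-- Trajectory Balance as Policy Gradient. For a parameterized
full-support forward policy family `pol θ`,
`−∇_θ V^{π_θ}₁(s₀) = ∇_θ KL(q^{π_θ} ‖ P_B) = ½ E_{τ∼π_θ}[∇_θ L_TB(τ)]`, where
`L_TB(τ) = (log[Z ∏ π_θ(s_i|s_{i-1})] − log[R(x_τ) ∏ P_B(s_{i-1}|s_i)])²` with the true
partition function `Z` as baseline. -/
theorem trajectory_balance_is_policy_gradient
    {S : Type} [Fintype S] (G : FinDAG S) (PB : S → S → ℝ) (R : S → ℝ)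
    (hPB : G.IsBackward PB) (hR : ∀ x, G.Terminal x → 0 < R x)
    (pol : ℝ → S → S → ℝ) (hpol : ∀ θ, G.IsForward (pol θ))
    (hdiff : ∀ s s', Differentiable ℝ (fun θ => pol θ s s'))
    (T : Finset (List S)) (hT : ∀ τ, τ ∈ T ↔ G.IsTraj τ)
    (Z : ℝ) (hZ : Z = ∑ τ ∈ T, R (G.lastState τ) * pathProd PB τ) (θ0 : ℝ) :
    - deriv (fun θ => regValue G PB R (pol θ) T) θ0
        = deriv (fun θ => ∑ τ ∈ T, pathProd (pol θ) τ *
            Real.log (pathProd (pol θ) τ / (R (G.lastState τ) / Z * pathProd PB τ))) θ0 ∧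
    deriv (fun θ => ∑ τ ∈ T, pathProd (pol θ) τ *
        Real.log (pathProd (pol θ) τ / (R (G.lastState τ) / Z * pathProd PB τ))) θ0
      = (1/2) * ∑ τ ∈ T, pathProd (pol θ0) τ *
          deriv (fun θ => (Real.log (Z * pathProd (pol θ) τ)
              - Real.log (R (G.lastState τ) * pathProd PB τ))^2) θ0 := by
  have hTeq : T = trajFrom G G.s0 := by
    ext τ
    rw [hT, mem_trajFrom]
    exact Iff.rfl
  have hsum1 : ∀ θ, ∑ τ ∈ T, pathProd (pol θ) τ = 1 := fun θ => by
    rw [hTeq]; exact sum_trajFrom G (hpol θ) G.s0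
  have hedge : ∀ τ ∈ T, ∀ p ∈ τ.zip τ.tail, G.edge p.1 p.2 :=
    fun τ hτ => chain'_zip τ ((hT τ).mp hτ).2.1
  have hgpos : ∀ τ ∈ T, ∀ θ, 0 < pathProd (pol θ) τ :=
    fun τ hτ θ => pathProd_pos_s10 (fun p hp => (hpol θ).pos _ _ (hedge τ hτ p hp))
  have hPpos : ∀ τ ∈ T, 0 < pathProd PB τ :=
    fun τ hτ => pathProd_pos_s10 (fun p hp => hPB.pos _ _ (hedge τ hτ p hp))
  have hRpos : ∀ τ ∈ T, 0 < R (G.lastState τ) :=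
    fun τ hτ => hR _ ((hT τ).mp hτ).2.2
  have hTne : T.Nonempty := by
    by_contra h
    rw [Finset.not_nonempty_iff_eq_empty] at h
    have h1 := hsum1 θ0
    rw [h] at h1
    simp at h1
  have hZpos : 0 < Z := by
    rw [hZ]
    exact Finset.sum_pos (fun τ hτ => mul_pos (hRpos τ hτ) (hPpos τ hτ)) hTne
  have hcpos : ∀ τ ∈ T, 0 < R (G.lastState τ) / Z * pathProd PB τ :=
    fun τ hτ => mul_pos (div_pos (hRpos τ hτ) hZpos) (hPpos τ hτ)
  have hgd : ∀ τ : List S, Differentiable ℝ (fun θ => pathProd (pol θ) τ) :=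
    fun τ => diff_pathProd pol hdiff τ
  -- derivative of each KL summand
  have hderivTerm : ∀ τ ∈ T, HasDerivAt
      (fun θ => pathProd (pol θ) τ *
        Real.log (pathProd (pol θ) τ / (R (G.lastState τ) / Z * pathProd PB τ)))
      (deriv (fun θ => pathProd (pol θ) τ) θ0 *
          Real.log (pathProd (pol θ0) τ / (R (G.lastState τ) / Z * pathProd PB τ))
        + deriv (fun θ => pathProd (pol θ) τ) θ0) θ0 := by
    intro τ hτ
    have hg : HasDerivAt (fun θ => pathProd (pol θ) τ)
        (deriv (fun θ => pathProd (pol θ) τ) θ0) θ0 := ((hgd τ) θ0).hasDerivAt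
    have hlog : HasDerivAt
        (fun θ => Real.log (pathProd (pol θ) τ / (R (G.lastState τ) / Z * pathProd PB τ)))
        (deriv (fun θ => pathProd (pol θ) τ) θ0 / pathProd (pol θ0) τ) θ0 := by
      have hfe : (fun θ => Real.log
            (pathProd (pol θ) τ / (R (G.lastState τ) / Z * pathProd PB τ)))
          = fun θ => Real.log (pathProd (pol θ) τ)
              - Real.log (R (G.lastState τ) / Z * pathProd PB τ) :=
        funext fun θ => Real.log_div (ne_of_gt (hgpos τ hτ θ)) (ne_of_gt (hcpos τ hτ))
      rw [hfe]
      exact (hg.log (ne_of_gt (hgpos τ hτ θ0))).sub_const _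
    have hmul := hg.mul hlog
    have h2 : pathProd (pol θ0) τ *
        (deriv (fun θ => pathProd (pol θ) τ) θ0 / pathProd (pol θ0) τ)
        = deriv (fun θ => pathProd (pol θ) τ) θ0 := by
      rw [mul_comm]
      exact div_mul_cancel₀ _ (ne_of_gt (hgpos τ hτ θ0))
    rw [h2] at hmul
    exact hmul
  have hKd : HasDerivAt
      (fun θ => ∑ τ ∈ T, pathProd (pol θ) τ *
        Real.log (pathProd (pol θ) τ / (R (G.lastState τ) / Z * pathProd PB τ)))
      (∑ τ ∈ T, (deriv (fun θ => pathProd (pol θ) τ) θ0 *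
          Real.log (pathProd (pol θ0) τ / (R (G.lastState τ) / Z * pathProd PB τ))
        + deriv (fun θ => pathProd (pol θ) τ) θ0)) θ0 := HasDerivAt.fun_sum hderivTerm
  have hsumg' : ∑ τ ∈ T, deriv (fun θ => pathProd (pol θ) τ) θ0 = 0 := by
    have h1 : HasDerivAt (fun θ => ∑ τ ∈ T, pathProd (pol θ) τ)
        (∑ τ ∈ T, deriv (fun θ => pathProd (pol θ) τ) θ0) θ0 :=
      HasDerivAt.fun_sum (fun τ _ => ((hgd τ) θ0).hasDerivAt)
    have h2 : (fun θ => ∑ τ ∈ T, pathProd (pol θ) τ) = fun _ => (1 : ℝ) :=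
      funext hsum1
    rw [h2] at h1
    simpa using h1.deriv.symm
  constructor
  · -- regValue θ = log Z - KL θ
    have hreg : (fun θ => regValue G PB R (pol θ) T)
        = (fun θ => Real.log Z - ∑ τ ∈ T, pathProd (pol θ) τ *
            Real.log (pathProd (pol θ) τ / (R (G.lastState τ) / Z * pathProd PB τ))) := by
      funext θ
      unfold regValue
      have hlz : Real.log Z = ∑ τ ∈ T, pathProd (pol θ) τ * Real.log Z := by
        rw [← Finset.sum_mul, hsum1 θ, one_mul]
      rw [hlz, ← Finset.sum_sub_distrib]
      apply Finset.sum_congr rfl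
      intro τ hτ
      rw [log_pathProd (fun p hp => hPB.pos _ _ (hedge τ hτ p hp))]
      rw [Real.log_div (ne_of_gt (hgpos τ hτ θ)) (ne_of_gt (hcpos τ hτ)),
        Real.log_mul (ne_of_gt (div_pos (hRpos τ hτ) hZpos)) (ne_of_gt (hPpos τ hτ)),
        Real.log_div (ne_of_gt (hRpos τ hτ)) (ne_of_gt hZpos)]
      ring
    rw [hreg, deriv_const_sub, neg_neg]
  · -- compute both sides
    rw [hKd.deriv, Finset.sum_add_distrib, hsumg', add_zero, Finset.mul_sum]
    refine Finset.sum_congr rfl fun τ hτ => ?_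
    -- compute the TB-loss derivative
    have hg : HasDerivAt (fun θ => pathProd (pol θ) τ)
        (deriv (fun θ => pathProd (pol θ) τ) θ0) θ0 := ((hgd τ) θ0).hasDerivAt
    have hrw : (fun θ => (Real.log (Z * pathProd (pol θ) τ)
          - Real.log (R (G.lastState τ) * pathProd PB τ)) ^ 2)
        = fun θ => (Real.log (pathProd (pol θ) τ)
            + (Real.log Z - Real.log (R (G.lastState τ) * pathProd PB τ))) ^ 2 := by
      funext θ
      rw [Real.log_mul (ne_of_gt hZpos) (ne_of_gt (hgpos τ hτ θ))]
      ring
    have hu : HasDerivAt (fun θ => Real.log (pathProd (pol θ) τ)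
          + (Real.log Z - Real.log (R (G.lastState τ) * pathProd PB τ)))
        (deriv (fun θ => pathProd (pol θ) τ) θ0 / pathProd (pol θ0) τ) θ0 :=
      (hg.log (ne_of_gt (hgpos τ hτ θ0))).add_const _
    have hsq := hu.fun_pow 2
    rw [hrw, hsq.deriv]
    have hu0 : Real.log (pathProd (pol θ0) τ)
          + (Real.log Z - Real.log (R (G.lastState τ) * pathProd PB τ))
        = Real.log (pathProd (pol θ0) τ / (R (G.lastState τ) / Z * pathProd PB τ)) := by
      rw [Real.log_div (ne_of_gt (hgpos τ hτ θ0)) (ne_of_gt (hcpos τ hτ)),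
        Real.log_mul (ne_of_gt (div_pos (hRpos τ hτ) hZpos)) (ne_of_gt (hPpos τ hτ)),
        Real.log_div (ne_of_gt (hRpos τ hτ)) (ne_of_gt hZpos),
        Real.log_mul (ne_of_gt (hRpos τ hτ)) (ne_of_gt (hPpos τ hτ))]
      ring
    rw [hu0]
    have hg0 : pathProd (pol θ0) τ ≠ 0 := ne_of_gt (hgpos τ hτ θ0)
    field_simp
    ring
end
end

section
/- For any two parameterized families of probability distributions where q_θ has full support on a finite set T and p is fixed, ∇_θ KL(q_θ ‖ p) = (1/2) E_{τ∼q_θ}[∇_θ (log(q_θ(τ)/p(τ)))²]. -/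
/-- For a differentiable full-support family `q θ` of probability
distributions on a finite set `T` and a fixed full-support distribution `p`,
`∇_θ KL(q_θ ‖ p) = ½ E_{τ∼q_θ}[∇_θ (log(q_θ(τ)/p(τ)))²]`. -/
theorem kl_gradient_eq_half_expected_squared_gradient
    {T : Type} [Fintype T]
    (q : ℝ → T → ℝ) (p : T → ℝ)
    (hqpos : ∀ θ τ, 0 < q θ τ) (hqsum : ∀ θ, ∑ τ, q θ τ = 1)
    (hqdiff : ∀ τ, Differentiable ℝ (fun θ => q θ τ))
    (hppos : ∀ τ, 0 < p τ) (hpsum : ∑ τ, p τ = 1) (θ0 : ℝ) :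
    deriv (fun θ => ∑ τ, q θ τ * Real.log (q θ τ / p τ)) θ0
      = (1/2) * ∑ τ, q θ0 τ * deriv (fun θ => (Real.log (q θ τ / p τ))^2) θ0 := by
  set d : T → ℝ := fun τ => deriv (fun θ => q θ τ) θ0 with hd
  set L : T → ℝ := fun τ => Real.log (q θ0 τ / p τ) with hL
  have hq0 : ∀ τ, q θ0 τ ≠ 0 := fun τ => (hqpos θ0 τ).ne'
  have hp0 : ∀ τ, p τ ≠ 0 := fun τ => (hppos τ).ne'
  have hqd : ∀ τ, HasDerivAt (fun θ => q θ τ) (d τ) θ0 :=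
    fun τ => ((hqdiff τ) θ0).hasDerivAt
  have hlogd : ∀ τ, HasDerivAt (fun θ => Real.log (q θ τ / p τ)) (d τ / q θ0 τ) θ0 := by
    intro τ
    have h2 := ((hqd τ).div_const (p τ)).log (div_ne_zero (hq0 τ) (hp0 τ))
    have : d τ / p τ / (q θ0 τ / p τ) = d τ / q θ0 τ := by
      field_simp
      rw [mul_comm (p τ) (q θ0 τ), mul_div_mul_right _ _ (hp0 τ)]
    rwa [this] at h2
  -- derivative of LHS
  have hLHS : HasDerivAt (fun θ => ∑ τ, q θ τ * Real.log (q θ τ / p τ))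
      (∑ τ, (d τ * L τ + q θ0 τ * (d τ / q θ0 τ))) θ0 :=
    HasDerivAt.fun_sum (fun τ _ => (hqd τ).mul (hlogd τ))
  -- sum of derivatives is zero
  have hsum0 : ∑ τ, d τ = 0 := by
    have h1 : HasDerivAt (fun θ => ∑ τ, q θ τ) (∑ τ, d τ) θ0 :=
      HasDerivAt.fun_sum (fun τ _ => hqd τ)
    have h2 : (fun θ => ∑ τ, q θ τ) = fun _ => (1 : ℝ) := funext hqsum
    rw [h2] at h1
    simpa using h1.unique (hasDerivAt_const θ0 1)
  have hRHSd : ∀ τ, deriv (fun θ => (Real.log (q θ τ / p τ))^2) θ0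
      = 2 * L τ * (d τ / q θ0 τ) := by
    intro τ
    have := ((hlogd τ).fun_pow 2).deriv
    simpa using this
  rw [hLHS.deriv]
  have e1 : ∀ τ, d τ * L τ + q θ0 τ * (d τ / q θ0 τ) = d τ * L τ + d τ := by
    intro τ; rw [mul_div_cancel₀ _ (hq0 τ)]
  have e2 : ∀ τ, q θ0 τ * deriv (fun θ => (Real.log (q θ τ / p τ))^2) θ0
      = 2 * (d τ * L τ) := by
    intro τ
    rw [hRHSd τ]
    have : q θ0 τ * (2 * L τ * (d τ / q θ0 τ))
        = 2 * (d τ * L τ) * (q θ0 τ / q θ0 τ) := by ring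
    rw [this, div_self (hq0 τ), mul_one]
  simp only [e1, e2]
  rw [Finset.sum_add_distrib, hsum0, add_zero, Finset.mul_sum]
  congr 1
  ext τ
  ring
end

section
/- Let G be a finite DAG with terminal states X, P_B a full-support backward policy, and R : X → ℝ_{>0}. Then there exists a unique Markovian flow F : edges ∪ states → ℝ_{>0} satisfying F(x) = R(x)·(flow out to s_f) boundary condition, F(s → s') = P_B(s|s')·F(s') for every edge, and F(s) = Σ_{s' child of s} F(s→s') for every non-terminal s; moreover the induced forward policy P_F(s'|s) = F(s→s')/F(s) together with P_B satisfies the trajectory balance equation Z·∏_i P_F(s_i|s_{i-1}) = R(x_τ)·∏_i P_B(s_{i-1}|s_i) for every complete trajectory τ, with Z = F(s₀). -/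
/- Common setup: finite DAGs, policies, trajectories, GFlowNet notions. -/

noncomputable section
open scoped Classical
open Finset Real

variable {S : Type} [Fintype S]

namespace FinDAGProof

variable {S : Type} [Fintype S]

/-- The constructed flow. -/
noncomputable def mkF (G : FinDAG S) (PB : S → S → ℝ) (R : S → ℝ) (s : S) : ℝ :=
  if G.Terminal s then R s
  else ∑ s' ∈ (G.children s).attach, PB s s'.1 * mkF G PB R s'.1
termination_by Finset.univ.sup G.rank + 1 - G.rank s
decreasing_by
  have hedge : G.edge s s'.1 := (Finset.mem_filter.mp s'.2).2
  have h1 : G.rank s < G.rank s'.1 := G.rank_lt hedge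
  have h2 : G.rank s'.1 ≤ Finset.univ.sup G.rank :=
    Finset.le_sup (Finset.mem_univ _)
  omega

lemma mkF_terminal (G : FinDAG S) (PB : S → S → ℝ) (R : S → ℝ) {x : S}
    (hx : G.Terminal x) : mkF G PB R x = R x := by
  rw [mkF.eq_def]; simp [hx]

lemma mkF_nonterminal (G : FinDAG S) (PB : S → S → ℝ) (R : S → ℝ) {s : S}
    (hs : ¬ G.Terminal s) :
    mkF G PB R s = ∑ s' ∈ G.children s, PB s s' * mkF G PB R s' := by
  rw [mkF.eq_def]; simp only [hs, if_false]
  rw [← Finset.sum_attach (G.children s) (fun s' => PB s s' * mkF G PB R s')]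

/-- Induction principle along edges (children before parents). -/
lemma rank_induction (G : FinDAG S) (P : S → Prop)
    (h : ∀ s, (∀ s', G.edge s s' → P s') → P s) : ∀ s, P s := by
  have key : ∀ n s, Finset.univ.sup G.rank + 1 - G.rank s ≤ n → P s := by
    intro n
    induction n with
    | zero =>
      intro s hs
      have h2 : G.rank s ≤ Finset.univ.sup G.rank := Finset.le_sup (Finset.mem_univ _)
      omega
    | succ n ih =>
      intro s hs
      refine h s fun s' hss' => ih s' ?_
      have h1 : G.rank s < G.rank s' := G.rank_lt hss'
      have h2 : G.rank s' ≤ Finset.univ.sup G.rank := Finset.le_sup (Finset.mem_univ _)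
      omega
  exact fun s => key _ s le_rfl

lemma mkF_pos (G : FinDAG S) (PB : S → S → ℝ) (R : S → ℝ)
    (hPB : G.IsBackward PB) (hR : ∀ x, G.Terminal x → 0 < R x) :
    ∀ s, 0 < mkF G PB R s := by
  refine rank_induction G _ fun s ih => ?_
  by_cases hs : G.Terminal s
  · rw [mkF_terminal G PB R hs]; exact hR s hs
  · rw [mkF_nonterminal G PB R hs]
    have hne : (G.children s).Nonempty := by
      simp only [FinDAG.Terminal, not_forall, not_not] at hs
      obtain ⟨s', hs'⟩ := hs
      exact ⟨s', by simp [FinDAG.children, hs']⟩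
    refine Finset.sum_pos (fun s' hs' => ?_) hne
    have hedge : G.edge s s' := by simpa [FinDAG.children] using hs'
    exact mul_pos (hPB.pos _ _ hedge) (ih s' hedge)

lemma telescope (G : FinDAG S) (PB : S → S → ℝ) (F : S → ℝ)
    (hFpos : ∀ s, 0 < F s) (d : S) :
    ∀ τ : List S,
      F (τ.headD d) * pathProd (fun s s' => PB s s' * F s' / F s) τ
        = pathProd PB τ * F (τ.getLastD d) := by
  intro τ
  induction τ with
  | nil => simp [pathProd]
  | cons a rest ih =>
    cases rest with
    | nil => simp [pathProd]
    | cons b t =>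
      have h1 : pathProd (fun s s' => PB s s' * F s' / F s) (a :: b :: t)
          = (PB a b * F b / F a) * pathProd (fun s s' => PB s s' * F s' / F s) (b :: t) := by
        simp [pathProd]
      have h2 : pathProd PB (a :: b :: t) = PB a b * pathProd PB (b :: t) := by
        simp [pathProd]
      have h3 : (a :: b :: t).getLastD d = (b :: t).getLastD d := by
        simp [List.getLastD]
      rw [h1, h2, h3]
      have ha : F a ≠ 0 := (hFpos a).ne'
      simp only [List.headD_cons] at ih ⊢
      have key : F a * ((PB a b * F b / F a) * pathProd (fun s s' => PB s s' * F s' / F s) (b :: t))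
          = PB a b * (F b * pathProd (fun s s' => PB s s' * F s' / F s) (b :: t)) := by
        field_simp
      rw [key, ih]; ring

end FinDAGProof

/-- Given a full-support backward policy `PB` and positive terminal
reward `R`, there is a unique positive Markovian flow `F` with `F(x) = R(x)` on
terminals, `F(s→s') = P_B(s|s') F(s')` and `F(s) = ∑_{s'} F(s→s')`; moreover the induced
forward policy `P_F(s'|s) = F(s→s')/F(s)` satisfies trajectory balance
`Z ∏ P_F = R(x_τ) ∏ P_B` on every complete trajectory, with `Z = F(s₀)`. -/
theorem flow_exists_unique_and_trajectory_balance
    {S : Type} [Fintype S] (G : FinDAG S) (PB : S → S → ℝ) (R : S → ℝ)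
    (hPB : G.IsBackward PB) (hR : ∀ x, G.Terminal x → 0 < R x)
    (T : Finset (List S)) (hT : ∀ τ, τ ∈ T ↔ G.IsTraj τ) :
    ∃ F : S → ℝ,
      ((∀ s, 0 < F s) ∧ G.IsFlow PB R F) ∧
      (∀ F' : S → ℝ, ((∀ s, 0 < F' s) ∧ G.IsFlow PB R F') → F' = F) ∧
      (∀ τ ∈ T,
        F G.s0 * pathProd (fun s s' => PB s s' * F s' / F s) τ
          = R (G.lastState τ) * pathProd PB τ) := by
  classical
  refine ⟨FinDAGProof.mkF G PB R,
    ⟨FinDAGProof.mkF_pos G PB R hPB hR,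
      fun x hx => FinDAGProof.mkF_terminal G PB R hx,
      fun s hs => FinDAGProof.mkF_nonterminal G PB R hs⟩, ?_, ?_⟩
  · rintro F' ⟨hpos, hterm, hrec⟩
    funext s
    revert s
    refine FinDAGProof.rank_induction G _ fun s ih => ?_
    by_cases hs : G.Terminal s
    · rw [hterm s hs, FinDAGProof.mkF_terminal G PB R hs]
    · rw [hrec s hs, FinDAGProof.mkF_nonterminal G PB R hs]
      refine Finset.sum_congr rfl fun s' hs' => ?_
      have hedge : G.edge s s' := by simpa [FinDAG.children] using hs'
      rw [ih s' hedge]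
  · intro τ hτ
    obtain ⟨hhead, hchain, htermτ⟩ := (hT τ).1 hτ
    have hpos := FinDAGProof.mkF_pos G PB R hPB hR
    have hd : τ.headD G.s0 = G.s0 := by
      cases τ with
      | nil => simp at hhead
      | cons a t => simp_all
    have htel := FinDAGProof.telescope G PB (FinDAGProof.mkF G PB R) hpos G.s0 τ
    rw [hd] at htel
    rw [htel, FinDAGProof.mkF_terminal G PB R htermτ]
    simp [FinDAG.lastState]
    ring
end
end

section
/- In the MDP M_G (λ = 1) constructed from a DAG with backward policy P_B and reward R, the softmax policy of the optimal soft Q-values, π*(s'|s) = exp(Q*₁(s,s') − V*₁(s)), equals F(s→s')/F(s) where F is the Markovian flow, and the entropy-regularized Bellman optimality identity V*₁(s) = log Σ_{s'} exp(log P_B(s|s') + ...) corresponds exactly to the flow-matching condition F(s) = Σ_{s'} P_B(s|s') F(s') for non-terminal s. -/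
/- Common setup: finite DAGs, policies, trajectories, GFlowNet notions. -/

noncomputable section
open scoped Classical
open Finset Real

variable {S : Type} [Fintype S]

/-- In `M_G` (λ = 1), the softmax of the optimal soft Q-values equals
the flow-induced forward policy: `π*(s'|s) = exp(Q*₁(s,s') − V*₁(s)) = F(s→s')/F(s)`,
and the soft Bellman optimality identity at non-terminal `s` is exactly the
flow-matching condition `F(s) = ∑_{s'} P_B(s|s') F(s')`. -/
theorem softmax_policy_is_flow_policy
    {S : Type} [Fintype S] (G : FinDAG S) (PB : S → S → ℝ) (R : S → ℝ)
    (hPB : G.IsBackward PB) (hR : ∀ x, G.Terminal x → 0 < R x)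
    (V : S → ℝ) (hV : G.IsSoftValue PB R V)
    (F : S → ℝ) (hFpos : ∀ s, 0 < F s) (hF : G.IsFlow PB R F) :
    (∀ s s', G.edge s s' →
      Real.exp (Real.log (PB s s') + V s' - V s) = PB s s' * F s' / F s) ∧
    (∀ s, ¬ G.Terminal s →
      Real.exp (V s) = ∑ s' ∈ G.children s, PB s s' * F s') := by

  -- Key: exp (V s) = F s for all s, by downward induction on rank.
  have hterm_case : ∀ s, G.Terminal s → Real.exp (V s) = F s := by
    intro s hs
    rw [hV.1 s hs, hF.1 s hs, Real.exp_log (hR s hs)]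
  have key : ∀ n s, Finset.univ.sup G.rank - G.rank s ≤ n → Real.exp (V s) = F s := by
    intro n
    induction n with
    | zero =>
      intro s hs
      apply hterm_case
      intro s' he
      have h1 : G.rank s' ≤ Finset.univ.sup G.rank := Finset.le_sup (Finset.mem_univ s')
      have h2 : Finset.univ.sup G.rank ≤ G.rank s := Nat.le_of_sub_eq_zero (Nat.le_zero.mp hs)
      exact absurd (G.rank_lt he) (by omega)
    | succ n ih =>
      intro s hs
      by_cases ht : G.Terminal s
      · exact hterm_case s ht
      · have hne : (G.children s).Nonempty := by
          simp only [FinDAG.Terminal, not_forall, not_not] at ht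
          obtain ⟨s', hs'⟩ := ht
          exact ⟨s', by simp [FinDAG.children, hs']⟩
        have hchild : ∀ s' ∈ G.children s,
            Real.exp (Real.log (PB s s') + V s') = PB s s' * F s' := by
          intro s' hmem
          have he : G.edge s s' := by simpa [FinDAG.children] using hmem
          have hrk : G.rank s < G.rank s' := G.rank_lt he
          have hle : G.rank s' ≤ Finset.univ.sup G.rank := Finset.le_sup (Finset.mem_univ s')
          rw [Real.exp_add, Real.exp_log (hPB.pos s s' he), ih s' (by omega)]
        have hsum : (∑ s' ∈ G.children s, Real.exp (Real.log (PB s s') + V s'))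
            = ∑ s' ∈ G.children s, PB s s' * F s' :=
          Finset.sum_congr rfl hchild
        have hpos : 0 < ∑ s' ∈ G.children s, Real.exp (Real.log (PB s s') + V s') :=
          Finset.sum_pos (fun s' _ => Real.exp_pos _) hne
        rw [hV.2 s ht, Real.exp_log hpos, hsum, ← hF.2 s ht]
  have hVF : ∀ s, Real.exp (V s) = F s := fun s => key _ s le_rfl
  constructor
  · intro s s' he
    rw [sub_eq_add_neg, Real.exp_add, Real.exp_add, Real.exp_neg,
      Real.exp_log (hPB.pos s s' he), hVF s', hVF s]
    ring
  · intro s hs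
    rw [hVF s, hF.2 s hs]
end
end

section
/- Fix α ∈ [0,1) and λ = 1/(1−α). In the Munchausen-DQN fixed point equations with entropy coefficient λ and Munchausen penalty coefficient α (i.e., augmented reward r + αλ log π(a|s), soft backup with coefficient λ), the fixed-point policy coincides with the optimal policy of the entropy-regularized MDP with effective coefficient (1−α)λ = 1; hence applied to the MDP M_G it recovers the GFlowNet forward policy P_F. -/
/- Common setup: finite DAGs, policies, trajectories, GFlowNet notions. -/

noncomputable section
open scoped Classical
open Finset Real

variable {S : Type} [Fintype S]

/-- Munchausen DQN recovers `P_F`. Fix `α ∈ [0,1)` and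
`λ = 1/(1−α)`. Suppose `(Q, π, W)` is a Munchausen-DQN fixed point on `M_G` with
entropy coefficient `λ` and Munchausen penalty `α`: `π` is the λ-softmax of `Q`,
`Q(s,s') = r(s,s') + αλ log π(s'|s) + W(s')` with `r(s,s') = log P_B(s|s')`, the
continuation value `W(s') = ∑_{s''} π(s''|s')(Q(s',s'') − λ log π(s''|s'))` at
non-terminal `s'`, and `W(x) = log R(x)` at terminal `x` (single action to `s_f` with
reward `log R(x)`). Then, since the effective entropy coefficient is `(1−α)λ = 1`, the
fixed-point policy equals the GFlowNet forward policy, i.e. the optimal policy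
`π*(s'|s) = exp(log P_B(s|s') + V(s') − V(s))` of the `λ' = 1` regularized `M_G`. -/
theorem munchausen_fixed_point_is_forward_policy
    {S : Type} [Fintype S] (G : FinDAG S) (PB : S → S → ℝ) (R : S → ℝ)
    (hPB : G.IsBackward PB) (hR : ∀ x, G.Terminal x → 0 < R x)
    (V : S → ℝ) (hV : G.IsSoftValue PB R V)
    (α lam : ℝ) (hα0 : 0 ≤ α) (hα1 : α < 1) (hlam : lam = 1 / (1 - α))
    (Q : S → S → ℝ) (pol : S → S → ℝ) (W : S → ℝ)
    (hpol : ∀ s s', G.edge s s' →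
      pol s s' = Real.exp (Q s s' / lam) / ∑ s'' ∈ G.children s, Real.exp (Q s s'' / lam))
    (hpol0 : ∀ s s', ¬ G.edge s s' → pol s s' = 0)
    (hQ : ∀ s s', G.edge s s' →
      Q s s' = Real.log (PB s s') + α * lam * Real.log (pol s s') + W s')
    (hWterm : ∀ x, G.Terminal x → W x = Real.log (R x))
    (hW : ∀ s', ¬ G.Terminal s' →
      W s' = ∑ s'' ∈ G.children s', pol s' s'' * (Q s' s'' - lam * Real.log (pol s' s''))) :
    ∀ s s', G.edge s s' → pol s s' = G.softOpt PB V s s' := by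
  have h1α : (0:ℝ) < 1 - α := by linarith
  have hlampos : 0 < lam := by rw [hlam]; positivity
  have hlamne : lam ≠ 0 := ne_of_gt hlampos
  set Z : S → ℝ := fun s => ∑ s'' ∈ G.children s, Real.exp (Q s s'' / lam) with hZdef
  have hmem : ∀ {s s' : S}, G.edge s s' → s' ∈ G.children s := by
    intro s s' h; simp [FinDAG.children, h]
  have hmem' : ∀ {s s' : S}, s' ∈ G.children s → G.edge s s' := by
    intro s s' h; simpa [FinDAG.children] using h
  have hZpos : ∀ s, ¬ G.Terminal s → 0 < Z s := by
    intro s hs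
    obtain ⟨s', hs'⟩ := not_forall.mp hs
    rw [not_not] at hs'
    exact Finset.sum_pos (fun i _ => Real.exp_pos _) ⟨s', hmem hs'⟩
  have hpolpos : ∀ s s', G.edge s s' → 0 < pol s s' := by
    intro s s' h
    rw [hpol s s' h]
    exact div_pos (Real.exp_pos _) (hZpos s (fun ht => ht s' h))
  have hpolsum : ∀ s, ¬ G.Terminal s → ∑ s'' ∈ G.children s, pol s s'' = 1 := by
    intro s hs
    have : ∀ s'' ∈ G.children s, pol s s'' = Real.exp (Q s s'' / lam) / Z s := by
      intro s'' h''; exact hpol s s'' (hmem' h'')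
    rw [Finset.sum_congr rfl this, ← Finset.sum_div, div_self (ne_of_gt (hZpos s hs))]
  have hlogpol : ∀ s s', G.edge s s' →
      Real.log (pol s s') = Q s s' / lam - Real.log (Z s) := by
    intro s s' h
    rw [hpol s s' h, Real.log_div (Real.exp_ne_zero _) (ne_of_gt (hZpos s fun ht => ht s' h)),
      Real.log_exp]
  have key : ∀ s s', G.edge s s' →
      Real.log (pol s s') = Real.log (PB s s') + W s' - lam * Real.log (Z s) := by
    intro s s' h
    have hq := hQ s s' h
    rw [hlogpol s s' h] at hq ⊢
    have hla : lam * (1 - α) = 1 := by rw [hlam]; field_simp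
    have hdiv : Q s s' / lam = Q s s' * (1 - α) := by
      rw [div_eq_iff hlamne]; linear_combination (-(Q s s')) * hla
    rw [hdiv] at hq ⊢
    linear_combination hq + (Q s s' * α + Real.log (Z s)) * hla
  have polform : ∀ s s', G.edge s s' →
      pol s s' = Real.exp (Real.log (PB s s') + W s' - lam * Real.log (Z s)) := by
    intro s s' h
    rw [← key s s' h, Real.exp_log (hpolpos s s' h)]
  have hZlog : ∀ s, ¬ G.Terminal s → lam * Real.log (Z s) =
      Real.log (∑ s' ∈ G.children s, Real.exp (Real.log (PB s s') + W s')) := by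
    intro s hs
    have h1 : (1:ℝ) = Real.exp (-(lam * Real.log (Z s))) *
        ∑ s' ∈ G.children s, Real.exp (Real.log (PB s s') + W s') := by
      rw [Finset.mul_sum, ← hpolsum s hs]
      apply Finset.sum_congr rfl
      intro s' h'
      rw [polform s s' (hmem' h'), ← Real.exp_add]
      ring_nf
    have h2 : ∑ s' ∈ G.children s, Real.exp (Real.log (PB s s') + W s') =
        Real.exp (lam * Real.log (Z s)) := by
      have := h1
      rw [Real.exp_neg] at this
      field_simp at this
      linarith [this]
    rw [h2, Real.log_exp]
  have hWnt : ∀ s, ¬ G.Terminal s → W s = lam * Real.log (Z s) := by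
    intro s hs
    rw [hW s hs]
    have : ∀ s'' ∈ G.children s, pol s s'' * (Q s s'' - lam * Real.log (pol s s'')) =
        pol s s'' * (lam * Real.log (Z s)) := by
      intro s'' h''
      rw [hlogpol s s'' (hmem' h'')]
      congr 1
      field_simp
      ring
    rw [Finset.sum_congr rfl this, ← Finset.sum_mul, hpolsum s hs, one_mul]
  have hWV : ∀ s, W s = V s := by
    have main : ∀ n : ℕ, ∀ s : S, Finset.univ.sup G.rank < G.rank s + n → W s = V s := by
      intro n
      induction n with
      | zero =>
        intro s h
        exact absurd (Finset.le_sup (f := G.rank) (Finset.mem_univ s)) (by omega)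
      | succ n ih =>
        intro s h
        by_cases hs : G.Terminal s
        · rw [hWterm s hs, hV.1 s hs]
        · rw [hWnt s hs, hZlog s hs, hV.2 s hs]
          congr 1
          apply Finset.sum_congr rfl
          intro s' h'
          rw [ih s' (by have := G.rank_lt (hmem' h'); omega)]
    intro s
    exact main (Finset.univ.sup G.rank + 1) s (by omega)
  intro s s' h
  have hs : ¬ G.Terminal s := fun ht => ht s' h
  rw [polform s s' h, FinDAG.softOpt, if_pos h, hWV s']
  congr 1
  have : lam * Real.log (Z s) = V s := by
    rw [hZlog s hs, hV.2 s hs]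
    congr 1
    apply Finset.sum_congr rfl
    intro s'' h''
    rw [hWV s'']
  rw [this]
end
end
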